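/- Let A₁, …, A_m ∈ ℝ^{n×n} be positive semidefinite with Aᵢ·Aⱼ = 0 for all i ≠ j, and let p₁, …, p_m > 0 with p₁ + ⋯ + p_m = 1. Then a positive semidefinite matrix Â minimizes B ↦ ∑ᵢ pᵢ·W₂²(Aᵢ, B) over all positive semidefinite matrices B if and only if there exist matrices G₁, …, G_m with Gᵢ·Gᵢᵀ = Aᵢ for each i such that Â = Ĝ·Ĝᵀ, where Ĝ = ∑ᵢ pᵢ·Gᵢ. -/

import Mathlib

open Matrix

/-- The positive semidefinite square root of a psd matrix (junk value `0` otherwise). -/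
noncomputable def psdSqrt {n : ℕ} (M : Matrix (Fin n) (Fin n) ℝ) : Matrix (Fin n) (Fin n) ℝ :=
  letI := Classical.propDecidable M.PosSemidef
  if h : M.PosSemidef then
    (h.1.eigenvectorUnitary : Matrix (Fin n) (Fin n) ℝ) *
      diagonal ((↑) ∘ (√·) ∘ h.1.eigenvalues) *
      (star h.1.eigenvectorUnitary : Matrix (Fin n) (Fin n) ℝ)
  else 0

/-- `trace √(√A·B·√A)`. -/
noncomputable def sqrtTr {n : ℕ} (A B : Matrix (Fin n) (Fin n) ℝ) : ℝ :=
  (psdSqrt (psdSqrt A * B * psdSqrt A)).trace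

/-- `T` is an optimal transport matrix from `A` to `B`. -/
def IsOT {n : ℕ} (A B T : Matrix (Fin n) (Fin n) ℝ) : Prop :=
  T * A * Tᵀ = B ∧ (A * T).trace = sqrtTr A B

/-- Squared Bures–Wasserstein distance. -/
noncomputable def W2sq {n : ℕ} (A B : Matrix (Fin n) (Fin n) ℝ) : ℝ :=
  A.trace + B.trace - 2 * sqrtTr A B

/-!
For psd `A = G Gᵀ` and `B = H Hᵀ`, polar decomposition gives `tr (G Hᵀ) ≤ tr √(√A B √A)` with
equality for suitable `G` and `H = √B`, so `W₂²(A, B)` is the least value of `‖G - √B‖²` (Frobenius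
norm) over the factorizations `G Gᵀ = A`. Hence the barycenter objective at `B` is the minimum of
`∑ᵢ pᵢ ‖Gᵢ - √B‖² = ∑ᵢ pᵢ ‖Gᵢ‖² - ‖Ĝ‖² + ‖Ĝ - √B‖²` over factorizations `Gᵢ Gᵢᵀ = Aᵢ`. When
`Aᵢ Aⱼ = 0` the `Gᵢ` have orthogonal column spaces, so `‖Ĝ‖² = ∑ᵢ pᵢ² tr Aᵢ` does not depend on
the factorization: the objective is at least `c = ∑ᵢ (pᵢ - pᵢ²) tr Aᵢ`, with equality exactly when
`√B = Ĝ` for some factorization.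
-/

lemma LinearMap.exists_linearIsometry_comp_eq_of_norm_eq {𝕜 E : Type*} [RCLike 𝕜]
    [NormedAddCommGroup E] [InnerProductSpace 𝕜 E] [FiniteDimensional 𝕜 E]
    (T P : E →ₗ[𝕜] E) (h : ∀ x, ‖T x‖ = ‖P x‖) :
    ∃ W : E →ₗᵢ[𝕜] E, ∀ x, W (P x) = T x := by
  have hker : LinearMap.ker P ≤ LinearMap.ker T := fun x hx => by
    rw [LinearMap.mem_ker, ← norm_eq_zero, h, norm_eq_zero, ← LinearMap.mem_ker]
    exact hx
  -- `f = T ∘ P⁻¹` on `range P`, an isometry by `h`; `W` is an isometric extension of it.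
  let f : LinearMap.range P →ₗ[𝕜] E :=
    (LinearMap.ker P).liftQ T hker ∘ₗ P.quotKerEquivRange.symm.toLinearMap
  have hf : ∀ x, f ⟨P x, LinearMap.mem_range_self P x⟩ = T x := fun x => by
    simp [f, LinearMap.quotKerEquivRange_symm_apply_image]
  refine ⟨LinearIsometry.extend ⟨f, ?_⟩, fun x => ?_⟩
  · rintro ⟨-, x, rfl⟩
    rw [hf, h]
    rfl
  · exact (LinearIsometry.extend_apply _ ⟨P x, _⟩).trans (hf x)

theorem Matrix.exists_mem_unitaryGroup_eq_mul_of_conjTranspose_mul_self_eq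
    {𝕜 ι : Type*} [RCLike 𝕜] [Fintype ι] [DecidableEq ι] {X Y : Matrix ι ι 𝕜}
    (h : Xᴴ * X = Yᴴ * Y) : ∃ W ∈ unitaryGroup ι 𝕜, X = W * Y := by
  have hnorm : ∀ x, ‖toEuclideanCLM (𝕜 := 𝕜) X x‖ = ‖toEuclideanCLM (𝕜 := 𝕜) Y x‖ := fun x => by
    have := congrArg (fun M => RCLike.re (inner 𝕜 (toEuclideanCLM (𝕜 := 𝕜) M x) x)) h
    simp only [← star_eq_conjTranspose, map_mul, map_star,
      ContinuousLinearMap.star_eq_adjoint] at this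
    rw [← sq_eq_sq₀ (norm_nonneg _) (norm_nonneg _),
      ContinuousLinearMap.apply_norm_sq_eq_inner_adjoint_left,
      ContinuousLinearMap.apply_norm_sq_eq_inner_adjoint_left]
    exact this
  obtain ⟨W', hW'⟩ := LinearMap.exists_linearIsometry_comp_eq_of_norm_eq
    (toEuclideanCLM (𝕜 := 𝕜) X).toLinearMap (toEuclideanCLM (𝕜 := 𝕜) Y).toLinearMap hnorm
  let u := Unitary.linearIsometryEquiv.symm (W'.toLinearIsometryEquiv rfl)
  refine ⟨_, Unitary.map_mem (toEuclideanCLM (n := ι) (𝕜 := 𝕜)).symm u.2, ?_⟩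
  apply EquivLike.injective (toEuclideanCLM (n := ι) (𝕜 := 𝕜))
  rw [map_mul, StarAlgEquiv.apply_symm_apply]
  ext1 x
  exact (hW' x).symm

section Frobenius

variable {ι κ : Type*} [Fintype ι] [Fintype κ]

lemma Matrix.trace_mul_transpose_self_nonneg (X : Matrix ι κ ℝ) : 0 ≤ (X * Xᵀ).trace := by
  simpa using (posSemidef_self_mul_conjTranspose X).trace_nonneg

lemma Matrix.trace_mul_transpose_self_eq_zero_iff (X : Matrix ι κ ℝ) :
    (X * Xᵀ).trace = 0 ↔ X = 0 := by
  simpa using trace_mul_conjTranspose_self_eq_zero_iff (A := X)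

lemma Matrix.trace_mul_transpose_comm (X Y : Matrix ι κ ℝ) : (X * Yᵀ).trace = (Y * Xᵀ).trace := by
  rw [← trace_transpose, transpose_mul, transpose_transpose]

lemma Matrix.trace_sub_mul_transpose_sub (X Y : Matrix ι κ ℝ) :
    ((X - Y) * (X - Y)ᵀ).trace = (X * Xᵀ).trace - 2 * (X * Yᵀ).trace + (Y * Yᵀ).trace := by
  simp only [transpose_sub, Matrix.sub_mul, Matrix.mul_sub, trace_sub, trace_mul_transpose_comm Y X]
  ring

lemma Matrix.transpose_mul_eq_zero_of_mul_eq_zero {X Y : Matrix ι κ ℝ}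
    (h : X * Xᵀ * (Y * Yᵀ) = 0) : Xᵀ * Y = 0 := by
  have h' : X * Xᴴ * (Y * Yᴴ) = 0 := by simpa using h
  rw [self_mul_conjTranspose_mul_eq_zero, mul_self_mul_conjTranspose_eq_zero] at h'
  simpa using h'

lemma Matrix.posSemidef_mul_transpose_self (X : Matrix ι ι ℝ) :
    (X * Xᵀ).PosSemidef := by
  simpa using posSemidef_self_mul_conjTranspose X

lemma Matrix.posSemidef_transpose_mul_self (X : Matrix ι ι ℝ) :
    (Xᵀ * X).PosSemidef := by
  simpa using posSemidef_conjTranspose_mul_self X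

lemma Matrix.PosSemidef.trace_mul_le_trace [DecidableEq ι]
    {P Q : Matrix ι ι ℝ} (hP : P.PosSemidef) (hQ : Q ∈ orthogonalGroup ι ℝ) :
    (P * Q).trace ≤ P.trace := by
  have hQQ : Qᵀ * Q = 1 := by simpa using (mem_orthogonalGroup_iff' ι ℝ).mp hQ
  have hPT : Pᵀ = P := isHermitian_iff_isSymm.mp hP.1
  have key : ((1 - Q) * P * (1 - Q)ᵀ).trace = 2 * (P.trace - (P * Q).trace) := by
    have h1 : (Q * P).trace = (P * Q).trace := trace_mul_comm Q P
    have h2 : (P * Qᵀ).trace = (P * Q).trace := by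
      rw [← trace_transpose, transpose_mul, transpose_transpose, hPT, h1]
    have h3 : (Q * P * Qᵀ).trace = P.trace := by
      rw [trace_mul_comm, ← Matrix.mul_assoc, hQQ, Matrix.one_mul]
    simp only [transpose_sub, transpose_one, Matrix.sub_mul, Matrix.mul_sub, Matrix.one_mul,
      Matrix.mul_one, trace_sub, h1, h2, h3]
    ring
  have := (hP.mul_mul_conjTranspose_same (1 - Q)).trace_nonneg
  rw [conjTranspose_eq_transpose_of_trivial, key] at this
  linarith

end Frobenius

section WeightedSum

variable {ι κ σ : Type*} [Fintype ι] [Fintype κ] [Fintype σ] {p : σ → ℝ} {G : σ → Matrix ι κ ℝ}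

lemma Matrix.trace_sum_smul_mul (p : σ → ℝ) (G : σ → Matrix ι κ ℝ) (H : Matrix κ ι ℝ) :
    ((∑ i, p i • G i) * H).trace = ∑ i, p i * (G i * H).trace := by
  simp [Matrix.sum_mul, trace_sum]

lemma Matrix.sum_trace_sub_mul_transpose_sub (hp1 : ∑ i, p i = 1) (H : Matrix ι κ ℝ) :
    ∑ i, p i * ((G i - H) * (G i - H)ᵀ).trace
      = ∑ i, p i * (G i * (G i)ᵀ).trace - ((∑ i, p i • G i) * (∑ i, p i • G i)ᵀ).trace
        + ((∑ i, p i • G i - H) * (∑ i, p i • G i - H)ᵀ).trace := by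
  simp only [trace_sub_mul_transpose_sub, mul_add, mul_sub, Finset.sum_add_distrib,
    Finset.sum_sub_distrib, trace_sum_smul_mul, ← Finset.sum_mul, hp1]
  rw [Finset.mul_sum]
  simp only [mul_left_comm (2 : ℝ)]
  ring

lemma Matrix.trace_sum_smul_mul_transpose_self (hG : ∀ i j, i ≠ j → (G i)ᵀ * G j = 0) :
    ((∑ i, p i • G i) * (∑ i, p i • G i)ᵀ).trace = ∑ i, p i ^ 2 * (G i * (G i)ᵀ).trace := by
  rw [trace_sum_smul_mul]
  refine Finset.sum_congr rfl fun i _ => ?_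
  rw [trace_mul_transpose_comm, trace_sum_smul_mul, Finset.sum_eq_single i]
  · ring
  · intro j _ hji
    rw [trace_mul_comm, hG i j hji.symm, trace_zero, mul_zero]
  · simp

end WeightedSum

section Bures

open scoped MatrixOrder

variable {n : ℕ} {A B M : Matrix (Fin n) (Fin n) ℝ}

lemma Matrix.PosSemidef.psdSqrt_eq_sqrt (h : M.PosSemidef) : psdSqrt M = CFC.sqrt M := by
  rw [CFC.sqrt_eq_real_sqrt M h.nonneg, cfcₙ_eq_cfc, h.1.cfc_eq, IsHermitian.cfc, psdSqrt,
    dif_pos h, Unitary.conjStarAlgAut_apply]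
  rfl

lemma Matrix.PosSemidef.posSemidef_psdSqrt (h : M.PosSemidef) : (psdSqrt M).PosSemidef := by
  rw [h.psdSqrt_eq_sqrt]
  exact (CFC.sqrt_nonneg M).posSemidef

lemma Matrix.PosSemidef.psdSqrt_mul_self (h : M.PosSemidef) : psdSqrt M * psdSqrt M = M := by
  rw [h.psdSqrt_eq_sqrt]
  exact CFC.sqrt_mul_sqrt_self M h.nonneg

lemma Matrix.PosSemidef.transpose_psdSqrt (h : M.PosSemidef) : (psdSqrt M)ᵀ = psdSqrt M :=
  isHermitian_iff_isSymm.mp h.posSemidef_psdSqrt.1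

lemma exists_mem_orthogonalGroup_eq_mul_psdSqrt (X : Matrix (Fin n) (Fin n) ℝ) :
    ∃ W ∈ orthogonalGroup (Fin n) ℝ, X = W * psdSqrt (Xᵀ * X) := by
  have hX := posSemidef_transpose_mul_self X
  apply exists_mem_unitaryGroup_eq_mul_of_conjTranspose_mul_self_eq
  simp only [conjTranspose_eq_transpose_of_trivial, hX.transpose_psdSqrt, hX.psdSqrt_mul_self]

lemma exists_mem_orthogonalGroup_eq_psdSqrt_mul (X : Matrix (Fin n) (Fin n) ℝ) :
    ∃ W ∈ orthogonalGroup (Fin n) ℝ, X = psdSqrt (X * Xᵀ) * W := by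
  obtain ⟨W, hW, hXW⟩ := exists_mem_orthogonalGroup_eq_mul_psdSqrt Xᵀ
  refine ⟨Wᵀ, transpose_mem_unitaryGroup_iff.mpr hW, ?_⟩
  have := congrArg transpose hXW
  rwa [transpose_transpose, transpose_mul,
    (posSemidef_mul_transpose_self X).transpose_psdSqrt] at this

lemma sqrtTr_eq_trace_psdSqrt (hA : A.PosSemidef) (hB : B.PosSemidef) :
    sqrtTr A B = (psdSqrt ((psdSqrt B * psdSqrt A)ᵀ * (psdSqrt B * psdSqrt A))).trace := by
  have : (psdSqrt B * psdSqrt A)ᵀ * (psdSqrt B * psdSqrt A) = psdSqrt A * B * psdSqrt A := by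
    rw [transpose_mul, hA.transpose_psdSqrt, hB.transpose_psdSqrt, Matrix.mul_assoc,
      ← Matrix.mul_assoc (psdSqrt B), hB.psdSqrt_mul_self, Matrix.mul_assoc]
  rw [sqrtTr, this]

theorem trace_mul_transpose_le_sqrtTr (G H : Matrix (Fin n) (Fin n) ℝ) :
    (G * Hᵀ).trace ≤ sqrtTr (G * Gᵀ) (H * Hᵀ) := by
  have hA := posSemidef_mul_transpose_self G
  have hB := posSemidef_mul_transpose_self H
  obtain ⟨U, hU, hGU⟩ := exists_mem_orthogonalGroup_eq_psdSqrt_mul G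
  obtain ⟨V, hV, hHV⟩ := exists_mem_orthogonalGroup_eq_psdSqrt_mul H
  set A := G * Gᵀ
  set B := H * Hᵀ
  obtain ⟨W, hW, hXW⟩ := exists_mem_orthogonalGroup_eq_mul_psdSqrt (psdSqrt B * psdSqrt A)
  rw [sqrtTr_eq_trace_psdSqrt hA hB]
  set C := psdSqrt ((psdSqrt B * psdSqrt A)ᵀ * (psdSqrt B * psdSqrt A))
  have hC : C.PosSemidef := (posSemidef_transpose_mul_self _).posSemidef_psdSqrt
  calc (G * Hᵀ).trace = (psdSqrt B * psdSqrt A * (U * Vᵀ)).trace := by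
        rw [hGU, hHV, transpose_mul, hB.transpose_psdSqrt, ← Matrix.mul_assoc, trace_mul_comm]
        simp only [Matrix.mul_assoc]
    _ = (C * (U * Vᵀ * W)).trace := by
        rw [hXW, Matrix.mul_assoc, trace_mul_comm, Matrix.mul_assoc]
    _ ≤ C.trace :=
        hC.trace_mul_le_trace (mul_mem (mul_mem hU (transpose_mem_unitaryGroup_iff.mpr hV)) hW)

lemma exists_W2sq_eq_trace_sub_mul_transpose_sub (hA : A.PosSemidef) (hB : B.PosSemidef) :
    ∃ G, G * Gᵀ = A ∧ W2sq A B = ((G - psdSqrt B) * (G - psdSqrt B)ᵀ).trace := by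
  obtain ⟨W, hW, hXW⟩ := exists_mem_orthogonalGroup_eq_mul_psdSqrt (psdSqrt B * psdSqrt A)
  have hWW : Wᵀ * W = 1 := (mem_orthogonalGroup_iff' ..).mp hW
  have hG : psdSqrt A * Wᵀ * (psdSqrt A * Wᵀ)ᵀ = A := by
    rw [transpose_mul, transpose_transpose, hA.transpose_psdSqrt, Matrix.mul_assoc,
      ← Matrix.mul_assoc Wᵀ, hWW, Matrix.one_mul, hA.psdSqrt_mul_self]
  have hopt : (psdSqrt A * Wᵀ * psdSqrt B).trace = sqrtTr A B := by
    rw [sqrtTr_eq_trace_psdSqrt hA hB]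
    set C := psdSqrt ((psdSqrt B * psdSqrt A)ᵀ * (psdSqrt B * psdSqrt A))
    calc (psdSqrt A * Wᵀ * psdSqrt B).trace = (psdSqrt B * psdSqrt A * Wᵀ).trace := by
          rw [trace_mul_comm, ← Matrix.mul_assoc]
      _ = (C * (Wᵀ * W)).trace := by
          rw [hXW, Matrix.mul_assoc, trace_mul_comm, Matrix.mul_assoc]
      _ = C.trace := by rw [hWW, Matrix.mul_one]
  refine ⟨psdSqrt A * Wᵀ, hG, ?_⟩
  rw [W2sq, trace_sub_mul_transpose_sub, hG, hB.transpose_psdSqrt, hB.psdSqrt_mul_self, hopt]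
  ring

lemma W2sq_le_trace_sub_mul_transpose_sub (G H : Matrix (Fin n) (Fin n) ℝ) :
    W2sq (G * Gᵀ) (H * Hᵀ) ≤ ((G - H) * (G - H)ᵀ).trace := by
  rw [W2sq, trace_sub_mul_transpose_sub]
  linarith [trace_mul_transpose_le_sqrtTr G H]

end Bures

section Barycenter

variable {n : ℕ} {ι : Type*} [Fintype ι] {A : ι → Matrix (Fin n) (Fin n) ℝ} {p : ι → ℝ}
  {G : ι → Matrix (Fin n) (Fin n) ℝ}

lemma sum_trace_sub_mul_transpose_sub_eq (hp1 : ∑ i, p i = 1)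
    (horth : ∀ i j, i ≠ j → A i * A j = 0) (hG : ∀ i, G i * (G i)ᵀ = A i)
    (H : Matrix (Fin n) (Fin n) ℝ) :
    ∑ i, p i * ((G i - H) * (G i - H)ᵀ).trace
      = ∑ i, p i * (A i).trace - ∑ i, p i ^ 2 * (A i).trace
        + ((∑ i, p i • G i - H) * (∑ i, p i • G i - H)ᵀ).trace := by
  have hGorth : ∀ i j, i ≠ j → (G i)ᵀ * G j = 0 := fun i j hij =>
    transpose_mul_eq_zero_of_mul_eq_zero (by rw [hG, hG]; exact horth i j hij)
  rw [sum_trace_sub_mul_transpose_sub hp1, trace_sum_smul_mul_transpose_self hGorth]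
  simp only [hG]

lemma sum_W2sq_le (hp : ∀ i, 0 ≤ p i) (hp1 : ∑ i, p i = 1)
    (horth : ∀ i j, i ≠ j → A i * A j = 0) (hG : ∀ i, G i * (G i)ᵀ = A i) :
    ∑ i, p i * W2sq (A i) ((∑ i, p i • G i) * (∑ i, p i • G i)ᵀ)
      ≤ ∑ i, p i * (A i).trace - ∑ i, p i ^ 2 * (A i).trace := by
  calc ∑ i, p i * W2sq (A i) ((∑ i, p i • G i) * (∑ i, p i • G i)ᵀ)
      ≤ ∑ i, p i * ((G i - ∑ i, p i • G i) * (G i - ∑ i, p i • G i)ᵀ).trace := by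
        refine Finset.sum_le_sum fun i _ => mul_le_mul_of_nonneg_left ?_ (hp i)
        rw [← hG i]
        exact W2sq_le_trace_sub_mul_transpose_sub _ _
    _ = ∑ i, p i * (A i).trace - ∑ i, p i ^ 2 * (A i).trace := by
        rw [sum_trace_sub_mul_transpose_sub_eq hp1 horth hG, sub_self, Matrix.zero_mul,
          trace_zero, add_zero]

lemma exists_sum_W2sq_eq (hA : ∀ i, (A i).PosSemidef) (hp1 : ∑ i, p i = 1)
    (horth : ∀ i j, i ≠ j → A i * A j = 0) {B : Matrix (Fin n) (Fin n) ℝ} (hB : B.PosSemidef) :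
    ∃ G : ι → Matrix (Fin n) (Fin n) ℝ, (∀ i, G i * (G i)ᵀ = A i) ∧
      ∑ i, p i * W2sq (A i) B = ∑ i, p i * (A i).trace - ∑ i, p i ^ 2 * (A i).trace
        + ((∑ i, p i • G i - psdSqrt B) * (∑ i, p i • G i - psdSqrt B)ᵀ).trace := by
  choose G hG hW2 using fun i => exists_W2sq_eq_trace_sub_mul_transpose_sub (hA i) hB
  refine ⟨G, hG, ?_⟩
  simp only [hW2, sum_trace_sub_mul_transpose_sub_eq hp1 horth hG]

end Barycenter

/-- If the psd matrices `A₁, …, A_m` satisfy `Aᵢ·Aⱼ = 0` for `i ≠ j`, then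
`Â ⪰ 0` is a weighted Wasserstein barycenter iff `Â = Ĝ·Ĝᵀ` with `Ĝ = ∑ᵢ pᵢ·Gᵢ` for some
Green's matrices `Gᵢ·Gᵢᵀ = Aᵢ`. -/
theorem stmt10 {n m : ℕ} (A : Fin m → Matrix (Fin n) (Fin n) ℝ)
    (hA : ∀ i, (A i).PosSemidef)
    (horth : ∀ i j, i ≠ j → A i * A j = 0)
    (p : Fin m → ℝ) (hp : ∀ i, 0 < p i) (hp1 : ∑ i, p i = 1)
    (Ahat : Matrix (Fin n) (Fin n) ℝ) (hAhat : Ahat.PosSemidef) :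
    (∀ B : Matrix (Fin n) (Fin n) ℝ, B.PosSemidef →
        ∑ i, p i * W2sq (A i) Ahat ≤ ∑ i, p i * W2sq (A i) B) ↔
      ∃ G : Fin m → Matrix (Fin n) (Fin n) ℝ, (∀ i, G i * (G i)ᵀ = A i) ∧
        Ahat = (∑ i, p i • G i) * (∑ i, p i • G i)ᵀ := by
  constructor
  · intro hmin
    obtain ⟨G, hG, hAhat_eq⟩ := exists_sum_W2sq_eq hA hp1 horth hAhat
    have hle := (hmin _ (posSemidef_mul_transpose_self _)).trans
      (sum_W2sq_le (fun i => (hp i).le) hp1 horth hG)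
    have hzero : ((∑ i, p i • G i - psdSqrt Ahat) * (∑ i, p i • G i - psdSqrt Ahat)ᵀ).trace = 0 :=
      le_antisymm (by linarith) (trace_mul_transpose_self_nonneg _)
    rw [trace_mul_transpose_self_eq_zero_iff, sub_eq_zero] at hzero
    refine ⟨G, hG, ?_⟩
    rw [hzero, hAhat.transpose_psdSqrt, hAhat.psdSqrt_mul_self]
  · rintro ⟨G, hG, rfl⟩ B hB
    obtain ⟨G', hG', hB_eq⟩ := exists_sum_W2sq_eq hA hp1 horth hB
    linarith [sum_W2sq_le (fun i => (hp i).le) hp1 horth hG,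
      trace_mul_transpose_self_nonneg (∑ i, p i • G' i - psdSqrt B)]
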